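/- With the structure M of the previous construction (predicates P_C measuring distance to closures of diagonal G-orbits), every automorphism π of M is a pointwise limit of elements of G; hence if G is closed in Isom(X,d), then Aut(M) = G. -/

import Mathlib

open Metric Set

/-- Two `n`-tuples have the same quantifier-free type if all predicates (including the
distance) agree on all corresponding subtuples. -/
def SameQFType {M : Type*} [MetricSpace M] {ι : Type*} (k : ι → ℕ)
    (P : ∀ i, (Fin (k i) → M) → ℝ) {n : ℕ} (a b : Fin n → M) : Prop :=
  (∀ s t, dist (a s) (a t) = dist (b s) (b t)) ∧
  ∀ (i : ι) (j : Fin (k i) → Fin n), P i (a ∘ j) = P i (b ∘ j)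

/-- A morphism of the relational metric structure: a map preserving all predicates,
in particular (since the distance is among the predicates) distance-preserving. -/
def IsMorphism {M : Type*} [MetricSpace M] {ι : Type*} (k : ι → ℕ)
    (P : ∀ i, (Fin (k i) → M) → ℝ) (f : M → M) : Prop :=
  Isometry f ∧ ∀ (i : ι) (x : Fin (k i) → M), P i (f ∘ x) = P i x

/-- An automorphism is a surjective morphism. -/
def IsAutomorphism {M : Type*} [MetricSpace M] {ι : Type*} (k : ι → ℕ)
    (P : ∀ i, (Fin (k i) → M) → ℝ) (f : M → M) : Prop :=
  IsMorphism k P f ∧ Function.Surjective f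

/-- Approximate ultrahomogeneity: tuples with the same quantifier-free type can be
`ε`-matched by an automorphism. -/
def ApproxUltrahomogeneous {M : Type*} [MetricSpace M] {ι : Type*} (k : ι → ℕ)
    (P : ∀ i, (Fin (k i) → M) → ℝ) : Prop :=
  ∀ (n : ℕ) (a b : Fin n → M), SameQFType k P a b → ∀ ε : ℝ, 0 < ε →
    ∃ g : M → M, IsAutomorphism k P g ∧ ∀ s, dist (g (a s)) (b s) ≤ ε

/-- The predicates of the canonical structure on `X` associated with `G ≤ Isom(X,d)`. -/
noncomputable def orbitPred {X : Type*} [MetricSpace X] (G : Subgroup (X ≃ᵢ X)) :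
    ∀ p : (Σ n : ℕ, Fin n → X), (Fin p.1 → X) → ℝ :=
  fun p x => min 1 (infDist x (closure {w : Fin p.1 → X | ∃ g ∈ G, (fun i => g (p.2 i)) = w}))

/-!
An automorphism `π` preserves the predicate attached to the orbit of a tuple `a`, which vanishes
at `a`; so it vanishes at `π ∘ a`, i.e. `π ∘ a` lies in the closure of the diagonal `G`-orbit of
`a`, and some `g ∈ G` moves `a` close to `π ∘ a`. Enumerating a finite set as a tuple gives the
approximation; closedness of `G` then puts `π` in `G`. Conversely, elements of `G` permute each
orbit isometrically and hence preserve the predicates.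
-/

namespace OrbitStructure

variable {X : Type*} [MetricSpace X] (G : Subgroup (X ≃ᵢ X))

def diagOrbit {n : ℕ} (a : Fin n → X) : Set (Fin n → X) :=
  {w | ∃ g ∈ G, (fun i => g (a i)) = w}

variable {G}

theorem self_mem_diagOrbit {n : ℕ} (a : Fin n → X) : a ∈ diagOrbit G a :=
  ⟨1, G.one_mem, rfl⟩

theorem image_comp_diagOrbit {g : X ≃ᵢ X} (hg : g ∈ G) {n : ℕ} (a : Fin n → X) :
    (fun w => ⇑g ∘ w) '' diagOrbit G a = diagOrbit G a := by
  ext w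
  constructor
  · rintro ⟨_, ⟨h, hh, rfl⟩, rfl⟩
    exact ⟨g * h, G.mul_mem hg hh, rfl⟩
  · rintro ⟨h, hh, rfl⟩
    refine ⟨fun i => (g⁻¹ * h) (a i), ⟨g⁻¹ * h, G.mul_mem (G.inv_mem hg) hh, rfl⟩, ?_⟩
    funext i
    simp

theorem orbitPred_eq {n : ℕ} (a x : Fin n → X) :
    orbitPred G ⟨n, a⟩ x = min 1 (infDist x (diagOrbit G a)) := by
  rw [orbitPred, infDist_closure]
  rfl

theorem orbitPred_self {n : ℕ} (a : Fin n → X) : orbitPred G ⟨n, a⟩ a = 0 := by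
  rw [orbitPred_eq, infDist_zero_of_mem (self_mem_diagOrbit a), min_eq_right zero_le_one]

theorem mem_closure_diagOrbit_of_orbitPred_eq_zero {n : ℕ} {a x : Fin n → X}
    (h : orbitPred G ⟨n, a⟩ x = 0) : x ∈ closure (diagOrbit G a) := by
  rw [orbitPred_eq] at h
  have hdist : infDist x (diagOrbit G a) = 0 := by
    rcases min_eq_iff.1 h with ⟨h1, -⟩ | ⟨h0, -⟩
    exacts [absurd h1 one_ne_zero, h0]
  exact (mem_closure_iff_infDist_zero ⟨a, self_mem_diagOrbit a⟩).2 hdist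

theorem orbitPred_comp {g : X ≃ᵢ X} (hg : g ∈ G) (p : Σ n : ℕ, Fin n → X)
    (x : Fin p.1 → X) : orbitPred G p (⇑g ∘ x) = orbitPred G p x := by
  obtain ⟨n, a⟩ := p
  have hΦ : Isometry fun w : Fin n → X => ⇑g ∘ w :=
    Isometry.piMap (fun _ => ⇑g) (fun _ => g.isometry)
  rw [orbitPred_eq, orbitPred_eq]
  conv_lhs => rw [← image_comp_diagOrbit hg a, infDist_image hΦ]

theorem isAutomorphism_of_mem {g : X ≃ᵢ X} (hg : g ∈ G) :
    IsAutomorphism (fun p : (Σ n : ℕ, Fin n → X) => p.1) (orbitPred G) g :=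
  ⟨⟨g.isometry, orbitPred_comp hg⟩, g.surjective⟩

variable {π : X → X}

theorem comp_mem_closure_diagOrbit_of_isMorphism
    (hπ : IsMorphism (fun p : (Σ n : ℕ, Fin n → X) => p.1) (orbitPred G) π)
    {n : ℕ} (a : Fin n → X) : π ∘ a ∈ closure (diagOrbit G a) :=
  mem_closure_diagOrbit_of_orbitPred_eq_zero <| (hπ.2 ⟨n, a⟩ a).trans (orbitPred_self a)

theorem exists_mem_dist_lt_of_isMorphism
    (hπ : IsMorphism (fun p : (Σ n : ℕ, Fin n → X) => p.1) (orbitPred G) π)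
    {n : ℕ} (a : Fin n → X) {ε : ℝ} (hε : 0 < ε) :
    ∃ g ∈ G, ∀ i, dist (g (a i)) (π (a i)) < ε := by
  obtain ⟨_, ⟨g, hg, rfl⟩, hclose⟩ :=
    Metric.mem_closure_iff.1 (comp_mem_closure_diagOrbit_of_isMorphism hπ a) ε hε
  exact ⟨g, hg, fun i => by
    rw [dist_comm]
    exact (dist_le_pi_dist _ _ i).trans_lt hclose⟩

theorem exists_mem_dist_lt_on_finset_of_isMorphism
    (hπ : IsMorphism (fun p : (Σ n : ℕ, Fin n → X) => p.1) (orbitPred G) π)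
    (F : Finset X) (ε : ℝ) (hε : 0 < ε) :
    ∃ g ∈ G, ∀ x ∈ F, dist (g x) (π x) < ε := by
  obtain ⟨g, hg, hclose⟩ :=
    exists_mem_dist_lt_of_isMorphism hπ (fun i => (F.equivFin.symm i : X)) hε
  refine ⟨g, hg, fun x hx => ?_⟩
  simpa using hclose (F.equivFin ⟨x, hx⟩)

end OrbitStructure

open OrbitStructure in
theorem orbitStructure_aut_eq_G_general {X : Type*} [MetricSpace X] (G : Subgroup (X ≃ᵢ X)) :
    (∀ π : X → X, IsAutomorphism (fun p : (Σ n : ℕ, Fin n → X) => p.1) (orbitPred G) π →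
      ∀ (F : Finset X) (ε : ℝ), 0 < ε → ∃ g ∈ G, ∀ x ∈ F, dist (g x) (π x) < ε) ∧
    ((∀ π : X ≃ᵢ X,
        (∀ (F : Finset X) (ε : ℝ), 0 < ε → ∃ g ∈ G, ∀ x ∈ F, dist (g x) (π x) < ε) →
        π ∈ G) →
      ∀ π : X → X,
        IsAutomorphism (fun p : (Σ n : ℕ, Fin n → X) => p.1) (orbitPred G) π ↔
          ∃ g ∈ G, ∀ x, g x = π x) := by
  have approx := fun π (hπ : IsAutomorphism _ (orbitPred G) π) =>
    exists_mem_dist_lt_on_finset_of_isMorphism hπ.1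
  refine ⟨approx, fun hclosed π => ⟨fun hπ => ?_, ?_⟩⟩
  · let e : X ≃ᵢ X := ⟨Equiv.ofBijective π ⟨hπ.1.1.injective, hπ.2⟩, hπ.1.1⟩
    exact ⟨e, hclosed e (approx π hπ), fun _ => rfl⟩
  · rintro ⟨g, hg, hgπ⟩
    obtain rfl : ⇑g = π := funext hgπ
    exact isAutomorphism_of_mem hg

/-- Every automorphism of the structure with the distance-to-orbit-closure predicates is a
pointwise limit of elements of `G`; hence if `G` is closed (under pointwise limits) in
`Isom(X,d)`, the automorphisms of the structure are exactly the elements of `G`. -/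
theorem orbitStructure_aut_eq_G {X : Type*} [MetricSpace X]
    [CompleteSpace X] [TopologicalSpace.SeparableSpace X]
    (hd : ∀ x y : X, dist x y ≤ 1) (G : Subgroup (X ≃ᵢ X)) :
    (∀ π : X → X, IsAutomorphism (fun p : (Σ n : ℕ, Fin n → X) => p.1) (orbitPred G) π →
      ∀ (F : Finset X) (ε : ℝ), 0 < ε → ∃ g ∈ G, ∀ x ∈ F, dist (g x) (π x) < ε) ∧
    ((∀ π : X ≃ᵢ X,
        (∀ (F : Finset X) (ε : ℝ), 0 < ε → ∃ g ∈ G, ∀ x ∈ F, dist (g x) (π x) < ε) →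
        π ∈ G) →
      ∀ π : X → X,
        IsAutomorphism (fun p : (Σ n : ℕ, Fin n → X) => p.1) (orbitPred G) π ↔
          ∃ g ∈ G, ∀ x, g x = π x) :=
  orbitStructure_aut_eq_G_general G
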